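/- Suppose the ADMM optimality conditions hold at step k, namely: (i) for all z ∈ Z, θ1(z) − θ1(z^{k+1}) + ⟨z − z^{k+1}, λ^k − β(Dx^k − z^{k+1})⟩ ≥ 0; (ii) for all x ∈ X, θ2(x) − θ2(x^{k+1}) + ⟨x − x^{k+1}, −Dᵀλ^k + βDᵀ(Dx^{k+1} − z^{k+1})⟩ ≥ 0; (iii) λ^{k+1} = λ^k − β(Dx^{k+1} − z^{k+1}). Then for every ω = (z, x, λ) ∈ Z × X × R^n, θ1(z^{k+1}) + θ2(x^{k+1}) − θ1(z) − θ2(x) + ⟨ω^{k+1} − ω, F(ω)⟩ ≤ (1/(2β))‖λ^k − λ‖₂² + (β/2)‖Dx^k − z‖₂² − (1/(2β))‖λ^{k+1} − λ‖₂² − (β/2)‖Dx^{k+1} − z‖₂² − (β/2)‖Dx^k − z^{k+1}‖₂², where ω^{k+1} = (z^{k+1}, x^{k+1}, λ^{k+1}). -/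

import Mathlib

open scoped RealInnerProductSpace

/-- Matrix-vector multiplication, landing in Euclidean space. -/
noncomputable def mulv {n d : ℕ} (A : Matrix (Fin n) (Fin d) ℝ)
    (x : EuclideanSpace ℝ (Fin d)) : EuclideanSpace ℝ (Fin n) := WithLp.toLp 2 (A.mulVec x)

/-- `θ₁(z) = ‖z‖₁`, the sum of absolute values of the entries of `z`. -/
noncomputable def theta1 {n : ℕ} (z : EuclideanSpace ℝ (Fin n)) : ℝ := ∑ i, |z i|

/-- `θ₂(x) = (α/2)‖y − Mx‖₂²`. -/
noncomputable def theta2 {m d : ℕ} (M : Matrix (Fin m) (Fin d) ℝ)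
    (y : EuclideanSpace ℝ (Fin m)) (α : ℝ) (x : EuclideanSpace ℝ (Fin d)) : ℝ :=
  α / 2 * ‖y - mulv M x‖ ^ 2

lemma mulv_adj {n d : ℕ} (D : Matrix (Fin n) (Fin d) ℝ) (v : EuclideanSpace ℝ (Fin d))
    (w : EuclideanSpace ℝ (Fin n)) : ⟪v, mulv D.transpose w⟫ = ⟪mulv D v, w⟫ := by
  simp [mulv, PiLp.inner_apply, RCLike.inner_apply, Matrix.mulVec, dotProduct,
    Finset.mul_sum, Finset.sum_mul, Matrix.transpose]
  rw [Finset.sum_comm]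
  congr 1; ext i; congr 1; ext j; ring

lemma mulv_sub {n d : ℕ} (D : Matrix (Fin n) (Fin d) ℝ) (u v : EuclideanSpace ℝ (Fin d)) :
    mulv D (u - v) = mulv D u - mulv D v := by
  ext i
  simp [mulv, Matrix.mulVec, dotProduct, mul_sub, Finset.sum_sub_distrib]

lemma mulv_add {n d : ℕ} (D : Matrix (Fin n) (Fin d) ℝ) (u v : EuclideanSpace ℝ (Fin d)) :
    mulv D (u + v) = mulv D u + mulv D v := by
  ext i
  simp [mulv, Matrix.mulVec, dotProduct, mul_add, Finset.sum_add_distrib]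

lemma mulv_neg {n d : ℕ} (D : Matrix (Fin n) (Fin d) ℝ) (u : EuclideanSpace ℝ (Fin d)) :
    mulv D (-u) = -(mulv D u) := by
  ext i
  simp [mulv, Matrix.mulVec, dotProduct]

lemma mulv_smul {n d : ℕ} (D : Matrix (Fin n) (Fin d) ℝ) (c : ℝ) (u : EuclideanSpace ℝ (Fin d)) :
    mulv D (c • u) = c • mulv D u := by
  ext i
  simp [mulv, Matrix.mulVec, dotProduct, Finset.mul_sum, mul_left_comm]

lemma key_eq {E : Type*} [NormedAddCommGroup E] [InnerProductSpace ℝ E]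
    (β : ℝ) (hβ : 0 < β) (z zk1 a b e lk1 l : E) :
    ⟪z - zk1, lk1 + β • (b - a)⟫ + ⟪e - b, -lk1⟫ + ⟪zk1 - z, l⟫ + ⟪b - e, -l⟫ +
      ⟪lk1 - l, e - z⟫
    = (1 / (2 * β)) * ‖(lk1 + β • (b - zk1)) - l‖ ^ 2 + β / 2 * ‖a - z‖ ^ 2 -
      (1 / (2 * β)) * ‖lk1 - l‖ ^ 2 - β / 2 * ‖b - z‖ ^ 2 - β / 2 * ‖a - zk1‖ ^ 2 := by
  have hβ' : β ≠ 0 := hβ.ne'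
  simp only [← real_inner_self_eq_norm_sq]
  simp only [inner_add_left, inner_add_right, inner_sub_left, inner_sub_right,
    real_inner_smul_left, real_inner_smul_right, inner_neg_left, inner_neg_right]
  simp only [real_inner_comm lk1 e, real_inner_comm l e, real_inner_comm lk1 z,
    real_inner_comm l z, real_inner_comm lk1 zk1, real_inner_comm l zk1, real_inner_comm l b,
    real_inner_comm b zk1, real_inner_comm a z, real_inner_comm b z, real_inner_comm a zk1,
    real_inner_comm lk1 b, real_inner_comm lk1 l]
  field_simp
  ring

/-- Key one-step inequality of ADMM: for every `ω = (z, x, λ) ∈ Z × X × ℝⁿ`,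
`θ(u^{k+1}) − θ(u) + ⟨ω^{k+1} − ω, F(ω)⟩` is bounded by the telescoping quantity
minus `(β/2)‖Dx^k − z^{k+1}‖²`. -/
theorem stmt_7 {n d m : ℕ} (D : Matrix (Fin n) (Fin d) ℝ) (M : Matrix (Fin m) (Fin d) ℝ)
    (y : EuclideanSpace ℝ (Fin m)) (α β : ℝ) (hα : 0 < α) (hβ : 0 < β)
    (Z : Set (EuclideanSpace ℝ (Fin n))) (X : Set (EuclideanSpace ℝ (Fin d)))
    (hZ : Convex ℝ Z) (hX : Convex ℝ X)
    (zk zk1 : EuclideanSpace ℝ (Fin n)) (xk xk1 : EuclideanSpace ℝ (Fin d))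
    (lk lk1 : EuclideanSpace ℝ (Fin n))
    (hzkZ : zk ∈ Z) (hzk1Z : zk1 ∈ Z) (hxkX : xk ∈ X) (hxk1X : xk1 ∈ X)
    (h1 : ∀ z ∈ Z, theta1 z - theta1 zk1 +
      ⟪z - zk1, lk - β • (mulv D xk - zk1)⟫ ≥ 0)
    (h2 : ∀ x ∈ X, theta2 M y α x - theta2 M y α xk1 +
      ⟪x - xk1, -(mulv D.transpose lk) + β • mulv D.transpose (mulv D xk1 - zk1)⟫ ≥ 0)
    (h3 : lk1 = lk - β • (mulv D xk1 - zk1)) :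
    ∀ z ∈ Z, ∀ x ∈ X, ∀ l : EuclideanSpace ℝ (Fin n),
      theta1 zk1 + theta2 M y α xk1 - theta1 z - theta2 M y α x +
        (⟪zk1 - z, l⟫ + ⟪xk1 - x, -(mulv D.transpose l)⟫ + ⟪lk1 - l, mulv D x - z⟫) ≤
      (1 / (2 * β)) * ‖lk - l‖ ^ 2 + β / 2 * ‖mulv D xk - z‖ ^ 2 -
        (1 / (2 * β)) * ‖lk1 - l‖ ^ 2 - β / 2 * ‖mulv D xk1 - z‖ ^ 2 -
        β / 2 * ‖mulv D xk - zk1‖ ^ 2 := by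
  intro z hzZ x hxX l
  set a := mulv D xk with ha
  set b := mulv D xk1 with hb
  set e := mulv D x with he
  have hlk : lk = lk1 + β • (b - zk1) := by rw [h3]; module
  -- transform h1
  have hz := h1 z hzZ
  have harg : lk - β • (a - zk1) = lk1 + β • (b - a) := by rw [hlk]; module
  rw [harg] at hz
  -- transform h2
  have hx := h2 x hxX
  have harg2 : -(mulv D.transpose lk) + β • mulv D.transpose (b - zk1)
      = mulv D.transpose (-lk1) := by
    rw [hlk, mulv_neg, mulv_add, mulv_smul]
    module
  rw [harg2, mulv_adj, mulv_sub] at hx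
  rw [← he, ← hb] at hx
  -- transform the goal's middle inner product
  have hg1 : ⟪xk1 - x, -(mulv D.transpose l)⟫ = ⟪b - e, -l⟫ := by
    rw [← mulv_neg, mulv_adj, mulv_sub, ← hb, ← he]
  rw [hg1, hlk]
  have hk := key_eq β hβ z zk1 a b e lk1 l
  linarith [hz, hx, hk]
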